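/- arXiv:1608.03360 — 10 statements merged into one kernel-verified Lean document; each statement's English description precedes it below -/
import Mathlib

section
/- If C is a compact convex subset of ℝ^n containing 0, then every point belonging to argmax_{v ∈ C} ⟨v, w⟩ for some w with σ_C(w) > 0 lies in the end set of C, i.e., S := ⋃_{w : σ_C(w) > 0} argmax_{v ∈ C} ⟨v, w⟩ ⊆ es(C). -/
open Set Metric Filter
open scoped RealInnerProductSpace

/-- The union S of argmax sets over directions with positive support value is
contained in the end set of C. -/
theorem argmax_union_subset_end_set {n : ℕ} (C : Set (EuclideanSpace ℝ (Fin n)))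
    (hconv : Convex ℝ C) (hcomp : IsCompact C)
    (h0 : (0 : EuclideanSpace ℝ (Fin n)) ∈ C) :
    (⋃ w ∈ {w : EuclideanSpace ℝ (Fin n) | 0 < sSup ((fun v => ⟪v, w⟫) '' C)},
        {v ∈ C | ∀ u ∈ C, ⟪u, w⟫ ≤ ⟪v, w⟫}) ⊆
      {x ∈ C | ∀ t : ℝ, 1 < t → t • x ∉ C} := by
  intro x hx
  simp only [mem_iUnion, mem_setOf_eq] at hx
  obtain ⟨w, hw, hxC, hmax⟩ := hx
  have hsup : sSup ((fun v => ⟪v, w⟫) '' C) ≤ ⟪x, w⟫ :=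
    csSup_le ⟨⟪(0 : EuclideanSpace ℝ (Fin n)), w⟫, mem_image_of_mem _ h0⟩
      (by rintro y ⟨u, hu, rfl⟩; exact hmax u hu)
  have hxw : 0 < ⟪x, w⟫ := lt_of_lt_of_le hw hsup
  refine ⟨hxC, fun t ht htx => ?_⟩
  have := hmax _ htx
  rw [real_inner_smul_left] at this
  nlinarith
end

section
/- If C is a compact convex subset of ℝ^n containing 0, then the end set of C equals the level set γ_C^{-1}(1) of the gauge function of C. -/
open Set Filter
open scoped Pointwise Topology

/-!
Points of `C` satisfy `gauge C x ≤ 1`. If `gauge C x < 1`, some `b < 1` has `x ∈ b • C`, so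
`b⁻¹ • x ∈ C` with `b⁻¹ > 1`; conversely `gauge C (t • x) = t` when `gauge C x = 1`, so no
`t • x` with `t > 1` lies in `C`. Finally `gauge C x = 1` forces `r • x ∈ C` for all
`r < 1` by star-convexity, and closedness puts `x` itself in `C`.
-/

section Gauge

variable {E : Type*} [AddCommGroup E] [Module ℝ E] {s : Set E} {x : E}

/-- The gauge takes the junk value `sInf ∅ = 0` when no positive dilate of `s` contains `x`. -/
theorem gauge_set_nonempty_of_gauge_ne_zero (h : gauge s x ≠ 0) :
    {r : ℝ | 0 < r ∧ x ∈ r • s}.Nonempty := by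
  by_contra hempty
  exact h (by rw [gauge, not_nonempty_iff_eq_empty.mp hempty, Real.sInf_empty])

theorem exists_one_lt_smul_mem_of_gauge_lt_one (hx : x ∈ s) (h : gauge s x < 1) :
    ∃ t : ℝ, 1 < t ∧ t • x ∈ s := by
  have hne : {r : ℝ | 0 < r ∧ x ∈ r • s}.Nonempty := ⟨1, one_pos, by rwa [one_smul]⟩
  obtain ⟨b, ⟨hb₀, hb⟩, hb₁⟩ := exists_lt_of_csInf_lt hne h
  exact ⟨b⁻¹, (one_lt_inv₀ hb₀).2 hb₁, (mem_smul_set_iff_inv_smul_mem₀ hb₀.ne' _ _).1 hb⟩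

theorem gauge_eq_one_of_mem_of_forall_smul_notMem (hx : x ∈ s)
    (h : ∀ t : ℝ, 1 < t → t • x ∉ s) : gauge s x = 1 := by
  refine (gauge_le_one_of_mem hx).antisymm (not_lt.1 fun hlt => ?_)
  obtain ⟨t, ht, htx⟩ := exists_one_lt_smul_mem_of_gauge_lt_one hx hlt
  exact h t ht htx

theorem smul_notMem_of_gauge_eq_one (h : gauge s x = 1) {t : ℝ} (ht : 1 < t) : t • x ∉ s := by
  intro htx
  have := gauge_le_one_of_mem htx
  rw [gauge_smul_of_nonneg (zero_le_one.trans ht.le), smul_eq_mul, h, mul_one] at this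
  exact this.not_gt ht

theorem StarConvex.mem_of_gauge_lt_one (hs : StarConvex ℝ 0 s) (h₀ : gauge s x ≠ 0)
    (h₁ : gauge s x < 1) : x ∈ s := by
  obtain ⟨b, ⟨hb₀, y, hy, rfl⟩, hb₁⟩ :=
    exists_lt_of_csInf_lt (gauge_set_nonempty_of_gauge_ne_zero h₀) h₁
  exact hs.smul_mem hy hb₀.le hb₁.le

theorem IsClosed.mem_of_gauge_le_one [TopologicalSpace E] [ContinuousSMul ℝ E]
    (hc : IsClosed s) (hs : StarConvex ℝ 0 s) (h₀ : gauge s x ≠ 0) (h₁ : gauge s x ≤ 1) :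
    x ∈ s := by
  have hmem : ∀ᶠ r : ℝ in 𝓝[<] 1, r • x ∈ s := by
    filter_upwards [Ioo_mem_nhdsLT one_pos] with r ⟨hr₀, hr₁⟩
    have hgauge : gauge s (r • x) = r * gauge s x := by
      rw [gauge_smul_of_nonneg hr₀.le, smul_eq_mul]
    refine hs.mem_of_gauge_lt_one ?_ ?_ <;> rw [hgauge]
    · exact mul_ne_zero hr₀.ne' h₀
    · exact mul_lt_one_of_nonneg_of_lt_one_left hr₀.le hr₁ h₁
  have hlim : Tendsto (fun r : ℝ => r • x) (𝓝[<] 1) (𝓝 x) := by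
    have hcont : Continuous fun r : ℝ => r • x := continuous_id.smul continuous_const
    simpa using (hcont.tendsto 1).mono_left nhdsWithin_le_nhds
  exact hc.mem_of_tendsto hlim hmem

end Gauge

/-- The end set of a compact convex set containing 0 is the level-one set of its gauge. -/
theorem end_set_eq_gauge_level_one {n : ℕ} (C : Set (EuclideanSpace ℝ (Fin n)))
    (hconv : Convex ℝ C) (hcomp : IsCompact C)
    (h0 : (0 : EuclideanSpace ℝ (Fin n)) ∈ C) :
    {x ∈ C | ∀ t : ℝ, 1 < t → t • x ∉ C} = {x | gauge C x = 1} := by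
  ext x
  constructor
  · rintro ⟨hx, hend⟩
    exact gauge_eq_one_of_mem_of_forall_smul_notMem hx hend
  · intro (h : gauge C x = 1)
    exact ⟨hcomp.isClosed.mem_of_gauge_le_one (hconv.starConvex h0) (by simp [h]) h.le,
      fun _ => smul_notMem_of_gauge_eq_one h⟩
end

section
/- If C is a compact convex subset of ℝ^n containing 0, then es(C) ⊆ cl(S), where S := ⋃_{w : σ_C(w) > 0} argmax_{v ∈ C} ⟨v, w⟩; consequently cl(es(C)) = cl(S). -/
set_option maxHeartbeats 1000000


open Set Metric Filter
open scoped RealInnerProductSpace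

/-- The end set is contained in the closure of S (the union of argmax sets over
directions with positive support value), hence cl(es C) = cl S. -/
theorem end_set_subset_closure_S {n : ℕ} (C : Set (EuclideanSpace ℝ (Fin n)))
    (hconv : Convex ℝ C) (hcomp : IsCompact C)
    (h0 : (0 : EuclideanSpace ℝ (Fin n)) ∈ C) :
    {x ∈ C | ∀ t : ℝ, 1 < t → t • x ∉ C} ⊆
      closure (⋃ w ∈ {w : EuclideanSpace ℝ (Fin n) | 0 < sSup ((fun v => ⟪v, w⟫) '' C)},
        {v ∈ C | ∀ u ∈ C, ⟪u, w⟫ ≤ ⟪v, w⟫}) ∧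
    closure {x ∈ C | ∀ t : ℝ, 1 < t → t • x ∉ C} =
      closure (⋃ w ∈ {w : EuclideanSpace ℝ (Fin n) | 0 < sSup ((fun v => ⟪v, w⟫) '' C)},
        {v ∈ C | ∀ u ∈ C, ⟪u, w⟫ ≤ ⟪v, w⟫}) := by
  have hclosed : IsClosed C := hcomp.isClosed
  -- S ⊆ E
  have hSE : (⋃ w ∈ {w : EuclideanSpace ℝ (Fin n) | 0 < sSup ((fun v => ⟪v, w⟫) '' C)},
        {v ∈ C | ∀ u ∈ C, ⟪u, w⟫ ≤ ⟪v, w⟫}) ⊆ {x ∈ C | ∀ t : ℝ, 1 < t → t • x ∉ C} := by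
    intro v hv
    simp only [mem_iUnion, mem_setOf_eq] at hv
    obtain ⟨w, hw, hvC, hmax⟩ := hv
    refine ⟨hvC, fun t ht hmem => ?_⟩
    have h1 : sSup ((fun v => ⟪v, w⟫) '' C) ≤ ⟪v, w⟫ := by
      apply csSup_le (Set.Nonempty.image _ ⟨v, hvC⟩)
      rintro y ⟨u, huC, rfl⟩
      exact hmax u huC
    have hv0 : 0 < ⟪v, w⟫ := lt_of_lt_of_le hw h1
    have h2 : ⟪t • v, w⟫ ≤ ⟪v, w⟫ := hmax (t • v) hmem
    rw [real_inner_smul_left] at h2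
    nlinarith
  -- E ⊆ closure S
  have hES : {x ∈ C | ∀ t : ℝ, 1 < t → t • x ∉ C} ⊆
      closure (⋃ w ∈ {w : EuclideanSpace ℝ (Fin n) | 0 < sSup ((fun v => ⟪v, w⟫) '' C)},
        {v ∈ C | ∀ u ∈ C, ⟪u, w⟫ ≤ ⟪v, w⟫}) := by
    intro x hx
    obtain ⟨hxC, hxt⟩ := hx
    have hx0 : x ≠ 0 := by
      intro h
      exact hxt 2 one_lt_two (by rw [h, smul_zero]; exact h0)
    have hxn : (0 : ℝ) < ‖x‖ := norm_pos_iff.mpr hx0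
    have key : ∀ t : ℝ, 1 < t →
        ∃ q ∈ (⋃ w ∈ {w : EuclideanSpace ℝ (Fin n) | 0 < sSup ((fun v => ⟪v, w⟫) '' C)},
          {v ∈ C | ∀ u ∈ C, ⟪u, w⟫ ≤ ⟪v, w⟫}), dist x q ≤ 2 * (t - 1) * ‖x‖ := by
      intro t ht
      have htx : t • x ∉ C := hxt t ht
      obtain ⟨p, hpC, hpmin⟩ :=
        exists_norm_eq_iInf_of_complete_convex ⟨x, hxC⟩ hclosed.isComplete hconv (t • x)
      have hproj : ∀ u ∈ C, ⟪t • x - p, u - p⟫ ≤ 0 :=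
        (norm_eq_iInf_iff_real_inner_le_zero hconv hpC).mp hpmin
      obtain ⟨w, hwdef⟩ : ∃ w : EuclideanSpace ℝ (Fin n), w = t • x - p := ⟨_, rfl⟩
      have hw0 : w ≠ 0 := by
        intro h
        apply htx
        have : t • x = p := by rwa [hwdef, sub_eq_zero] at h
        rwa [this]
      -- p maximizes ⟪·, w⟫ on C
      have hle : ∀ u ∈ C, ⟪u, w⟫ ≤ ⟪p, w⟫ := by
        intro u huC
        have h2 := hproj u huC
        rw [← hwdef, inner_sub_right] at h2
        linarith [real_inner_comm u w, real_inner_comm p w]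
      have hwx : ⟪t • x, w⟫ - ⟪p, w⟫ = ‖w‖ ^ 2 := by
        rw [← inner_sub_left, ← hwdef, real_inner_self_eq_norm_sq]
      have hwpos : (0 : ℝ) < ‖w‖ ^ 2 := pow_pos (norm_pos_iff.mpr hw0) 2
      have hxw : 0 < ⟪x, w⟫ := by
        have h1 : ⟪x, w⟫ ≤ ⟪p, w⟫ := hle x hxC
        rw [real_inner_smul_left] at hwx
        nlinarith
      have hpw : 0 < ⟪p, w⟫ := lt_of_lt_of_le hxw (hle x hxC)
      have hsup : 0 < sSup ((fun v => ⟪v, w⟫) '' C) := by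
        refine lt_of_lt_of_le hpw (le_csSup ⟨⟪p, w⟫, ?_⟩ ⟨p, hpC, rfl⟩)
        rintro y ⟨u, huC, rfl⟩
        exact hle u huC
      refine ⟨p, ?_, ?_⟩
      · exact mem_biUnion hsup ⟨hpC, hle⟩
      · have hinf : ‖t • x - p‖ ≤ ‖t • x - x‖ := by
          rw [hpmin]
          have hbdd : BddBelow (Set.range fun w : C => ‖t • x - (w : EuclideanSpace ℝ (Fin n))‖) := by
            refine ⟨0, ?_⟩
            rintro a ⟨i, rfl⟩
            exact norm_nonneg _
          exact ciInf_le hbdd ⟨x, hxC⟩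
        have hxx : ‖t • x - x‖ = (t - 1) * ‖x‖ := by
          have h3 : t • x - x = (t - 1) • x := by rw [sub_smul, one_smul]
          rw [h3, norm_smul, Real.norm_eq_abs, abs_of_pos (by linarith : (0:ℝ) < t - 1)]
        calc dist x p ≤ dist x (t • x) + dist (t • x) p := dist_triangle _ _ _
          _ = ‖t • x - x‖ + ‖t • x - p‖ := by
              rw [dist_eq_norm, dist_eq_norm, norm_sub_rev]
          _ ≤ (t - 1) * ‖x‖ + (t - 1) * ‖x‖ := by rw [hxx]; linarith [hinf, hxx]
          _ = 2 * (t - 1) * ‖x‖ := by ring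
    rw [Metric.mem_closure_iff]
    intro ε hε
    obtain ⟨q, hq, hdq⟩ := key (1 + ε / (4 * ‖x‖)) (by
      have : 0 < ε / (4 * ‖x‖) := div_pos hε (by positivity)
      linarith)
    refine ⟨q, hq, lt_of_le_of_lt hdq ?_⟩
    have h4 : 2 * (1 + ε / (4 * ‖x‖) - 1) * ‖x‖ = ε / 2 := by
      field_simp
      ring
    rw [h4]
    linarith
  exact ⟨hES, Subset.antisymm (closure_minimal hES isClosed_closure) (closure_mono hSE)⟩
end

section
/- If C ⊆ ℝ^n is a compact convex polytope containing 0, then the end set es(C) is closed and es(C) = ⋃_{w : σ_C(w) > 0} argmax_{v ∈ C} ⟨v, w⟩. -/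
/-!
An end point `x` of `C = conv A` is not in the cone generated by `A - x`: a conic combination
`x = ∑ μₐ (a - x)` with `s = ∑ μₐ > 0` exhibits `((1 + s) / s) • x` as a point of `C`. Finitely
generated cones are closed (conic Carathéodory reduces them to linearly independent generators),
so Farkas' lemma yields `w` with `⟪a - x, w⟫ ≤ 0` on `A` and `⟪x, w⟫ > 0`: the point `x` maximises
`⟪·, w⟫` on `C` with positive value. Conversely such a maximiser cannot be pushed outwards.

Every argmax set is an exposed face of `C`, hence by Krein–Milman the convex hull of its extreme
points, which lie in `A`. Only finitely many such hulls occur, so the end set is closed.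
-/

open Set
open scoped RealInnerProductSpace

namespace PointedCone

variable {E : Type*} [AddCommGroup E] [Module ℝ E]

theorem mem_hull_finset_iff {s : Finset E} {x : E} :
    x ∈ hull ℝ (s : Set E) ↔
      ∃ c : E → ℝ, (∀ b ∈ s, 0 ≤ c b) ∧ ∑ b ∈ s, c b • b = x := by
  classical
  rw [Submodule.mem_span_finset]
  constructor
  · rintro ⟨f, -, rfl⟩
    exact ⟨fun b => f b, fun b _ => (f b).2, by simp only [Nonneg.coe_smul]⟩
  · rintro ⟨c, hc, rfl⟩
    refine ⟨fun b => if hb : b ∈ s then ⟨c b, hc b hb⟩ else 0,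
      Function.support_subset_iff'.2 fun b hb => dif_neg hb,
      Finset.sum_congr rfl fun b hb => by simp [hb, ← Nonneg.coe_smul]⟩

theorem exists_mem_hull_erase_of_not_linearIndepOn [DecidableEq E] {s : Finset E}
    (hs : ¬LinearIndepOn ℝ id (s : Set E)) {x : E} (hx : x ∈ hull ℝ (s : Set E)) :
    ∃ b ∈ s, x ∈ hull ℝ (s.erase b : Set E) := by
  obtain ⟨c, hc, rfl⟩ := mem_hull_finset_iff.1 hx
  obtain ⟨g, hg, hpos⟩ : ∃ g : E → ℝ, ∑ b ∈ s, g b • b = 0 ∧ ∃ b ∈ s, 0 < g b := by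
    obtain ⟨g, hg, b, hb, hgb⟩ := not_linearIndepOn_finset_iff.1 hs
    rcases hgb.lt_or_gt with hneg | hpos
    · exact ⟨-g, by simpa [neg_smul] using hg, b, hb, by simpa using hneg⟩
    · exact ⟨g, hg, b, hb, hpos⟩
  obtain ⟨b₀, hb₀, hmin⟩ := (s.filter (0 < g ·)).exists_min_image (fun b => c b / g b)
    (by simpa [Finset.filter_nonempty_iff] using hpos)
  rw [Finset.mem_filter] at hb₀
  -- Subtract the largest multiple of the relation `g` that keeps all coefficients nonnegative.
  set t := c b₀ / g b₀
  have ht : 0 ≤ t := div_nonneg (hc b₀ hb₀.1) hb₀.2.le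
  refine ⟨b₀, hb₀.1, mem_hull_finset_iff.2 ⟨fun b => c b - t * g b, fun b hb => ?_, ?_⟩⟩
  · have hb := Finset.mem_of_mem_erase hb
    rw [sub_nonneg]
    rcases lt_or_ge 0 (g b) with hgb | hgb
    · exact (le_div_iff₀ hgb).1 (hmin b (Finset.mem_filter.2 ⟨hb, hgb⟩))
    · exact (mul_nonpos_of_nonneg_of_nonpos ht hgb).trans (hc b hb)
  · rw [Finset.sum_erase _ (by simp [t, hb₀.2.ne'])]
    simp only [sub_smul, mul_smul, Finset.sum_sub_distrib, ← Finset.smul_sum, hg, smul_zero,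
      sub_zero]

theorem exists_linearIndepOn_of_mem_hull {s : Finset E} {x : E} (hx : x ∈ hull ℝ (s : Set E)) :
    ∃ t ⊆ s, LinearIndepOn ℝ id (t : Set E) ∧ x ∈ hull ℝ (t : Set E) := by
  classical
  induction s using Finset.strongInduction with
  | H s ih =>
    by_cases hs : LinearIndepOn ℝ id (s : Set E)
    · exact ⟨s, subset_rfl, hs, hx⟩
    obtain ⟨b, hb, hxb⟩ := exists_mem_hull_erase_of_not_linearIndepOn hs hx
    obtain ⟨t, hts, ht, hxt⟩ := ih _ (Finset.erase_ssubset hb) hxb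
    exact ⟨t, hts.trans (Finset.erase_subset b s), ht, hxt⟩

variable [TopologicalSpace E] [IsTopologicalAddGroup E] [ContinuousSMul ℝ E] [T2Space E]

theorem isClosed_hull_of_linearIndepOn {t : Finset E} (ht : LinearIndepOn ℝ id (t : Set E)) :
    IsClosed (hull ℝ (t : Set E) : Set E) := by
  have himage : (hull ℝ (t : Set E) : Set E) =
      Fintype.linearCombination ℝ (Subtype.val : t → E) '' Ici 0 := by
    ext x
    rw [SetLike.mem_coe, Submodule.mem_span_finset']
    constructor
    · rintro ⟨f, rfl⟩
      exact ⟨fun b => f b, fun b => (f b).2,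
        by simp [Fintype.linearCombination_apply, Nonneg.coe_smul]⟩
    · rintro ⟨c, hc, rfl⟩
      exact ⟨fun b => ⟨c b, hc b⟩, by simp [Fintype.linearCombination_apply, ← Nonneg.coe_smul]⟩
  rw [himage]
  refine (LinearMap.isClosedEmbedding_of_injective ?_).isClosedMap _ isClosed_Ici
  exact LinearMap.ker_eq_bot.2 (linearIndependent_iff_injective_fintypeLinearCombination.1 ht)

theorem isClosed_hull_finset (s : Finset E) : IsClosed (hull ℝ (s : Set E) : Set E) := by
  classical
  have hunion : (hull ℝ (s : Set E) : Set E) =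
      ⋃ (t : Finset E) (_ : t ∈ s.powerset.filter
        fun t : Finset E => LinearIndepOn ℝ id (t : Set E)), (hull ℝ (t : Set E) : Set E) := by
    refine Subset.antisymm (fun x hx => ?_) (iUnion₂_subset fun t ht => ?_)
    · obtain ⟨t, hts, ht, hxt⟩ := exists_linearIndepOn_of_mem_hull hx
      exact mem_biUnion (Finset.mem_filter.2 ⟨Finset.mem_powerset.2 hts, ht⟩) hxt
    · exact Submodule.span_mono (Finset.coe_subset.2
        (Finset.mem_powerset.1 (Finset.mem_filter.1 ht).1))
  rw [hunion]
  exact isClosed_biUnion_finset fun t ht =>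
    isClosed_hull_of_linearIndepOn (Finset.mem_filter.1 ht).2

theorem exists_inner_pos_of_notMem_hull {F : Type*} [NormedAddCommGroup F]
    [InnerProductSpace ℝ F] [CompleteSpace F] {s : Finset F} {x : F}
    (hx : x ∉ hull ℝ (s : Set F)) : ∃ w, (∀ b ∈ s, ⟪b, w⟫ ≤ 0) ∧ 0 < ⟪x, w⟫ := by
  let K : ProperCone ℝ F := ⟨hull ℝ (s : Set F), isClosed_hull_finset s⟩
  obtain ⟨y, hy, hxy⟩ := K.hyperplane_separation' hx
  exact ⟨-y, fun b hb => by simpa using hy b (subset_hull hb), by simpa using hxy⟩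

end PointedCone

open PointedCone

theorem exists_one_lt_smul_mem_convexHull_of_mem_hull_sub {E : Type*} [AddCommGroup E]
    [Module ℝ E] [DecidableEq E] {A : Finset E} {x : E} (hx : x ∈ convexHull ℝ (A : Set E))
    (hxK : x ∈ hull ℝ (A.image (· - x) : Set E)) :
    ∃ t : ℝ, 1 < t ∧ t • x ∈ convexHull ℝ (A : Set E) := by
  obtain ⟨c, hc, hcx⟩ := mem_hull_finset_iff.1 hxK
  rw [Finset.sum_image fun a _ b _ hab => sub_left_injective hab] at hcx
  set μ : E → ℝ := fun a => c (a - x)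
  have hμ : ∀ a ∈ A, 0 ≤ μ a := fun a ha => hc _ (Finset.mem_image_of_mem _ ha)
  set s := ∑ a ∈ A, μ a
  have hsum : ∑ a ∈ A, μ a • a = (1 + s) • x := by
    rw [← sub_eq_zero, add_smul, one_smul, Finset.sum_smul]
    nth_rewrite 1 [← hcx]
    simp only [smul_sub, Finset.sum_sub_distrib]
    abel
  rcases (Finset.sum_nonneg hμ).eq_or_lt with hs | hs
  · have hx0 : x = 0 := by
      rw [← one_smul ℝ x, ← add_zero (1 : ℝ), hs, ← hsum]
      exact Finset.sum_eq_zero fun a ha => by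
        rw [(Finset.sum_eq_zero_iff_of_nonneg hμ).1 hs.symm a ha, zero_smul]
    exact ⟨2, one_lt_two, by rwa [hx0, smul_zero, ← hx0]⟩
  · refine ⟨(1 + s) / s, by rw [lt_div_iff₀ hs]; linarith, ?_⟩
    have hmem := A.centerMass_mem_convexHull hμ hs fun a ha => ha
    rwa [Finset.centerMass, hsum, smul_smul, ← div_eq_inv_mul] at hmem

section Exposed

variable {E : Type*} [AddCommGroup E] [Module ℝ E] [TopologicalSpace E] [T2Space E]
  [IsTopologicalAddGroup E] [ContinuousSMul ℝ E] [LocallyConvexSpace ℝ E]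

theorem IsExposed.eq_convexHull_inter {A B : Set E} (hA : A.Finite)
    (hB : IsExposed ℝ (convexHull ℝ A) B) : B = convexHull ℝ (B ∩ A) := by
  have hBconv : Convex ℝ B := hB.convex (convex_convexHull ℝ A)
  refine Subset.antisymm ?_ (convexHull_min inter_subset_left hBconv)
  have hext : B.extremePoints ℝ ⊆ B ∩ A := fun x hx =>
    ⟨hx.1, extremePoints_convexHull_subset (hB.isExtreme.extremePoints_subset_extremePoints hx)⟩
  calc B = closure (convexHull ℝ (B.extremePoints ℝ)) :=
        (closure_convexHull_extremePoints (hB.isCompact (hA.isCompact_convexHull ℝ)) hBconv).symm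
    _ ⊆ closure (convexHull ℝ (B ∩ A)) := closure_mono (convexHull_mono hext)
    _ = convexHull ℝ (B ∩ A) :=
        ((hA.subset inter_subset_right).isCompact_convexHull ℝ).isClosed.closure_eq

theorem isClosed_iUnion_of_isExposed_convexHull {ι : Type*} {A : Set E} (hA : A.Finite)
    {F : ι → Set E} (hF : ∀ i, IsExposed ℝ (convexHull ℝ A) (F i)) : IsClosed (⋃ i, F i) := by
  rw [iUnion_congr fun i => (hF i).eq_convexHull_inter hA,
    ← biUnion_range (f := fun i => F i ∩ A) (g := convexHull ℝ)]
  refine (hA.finite_subsets.subset ?_).isClosed_biUnion fun S hS => ?_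
  · exact range_subset_iff.2 fun i => inter_subset_right
  · obtain ⟨i, rfl⟩ := hS
    exact ((hA.subset inter_subset_right).isCompact_convexHull ℝ).isClosed

end Exposed

section InnerProduct

variable {E : Type*} [NormedAddCommGroup E] [InnerProductSpace ℝ E]

theorem exists_inner_pos_of_forall_smul_notMem_convexHull [CompleteSpace E] {A : Set E}
    (hA : A.Finite) {x : E} (hx : x ∈ convexHull ℝ A)
    (hend : ∀ t : ℝ, 1 < t → t • x ∉ convexHull ℝ A) :
    ∃ w, 0 < ⟪x, w⟫ ∧ ∀ u ∈ convexHull ℝ A, ⟪u, w⟫ ≤ ⟪x, w⟫ := by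
  classical
  lift A to Finset E using hA
  obtain ⟨w, hw, hxw⟩ := exists_inner_pos_of_notMem_hull fun hxK =>
    let ⟨t, ht, htx⟩ := exists_one_lt_smul_mem_convexHull_of_mem_hull_sub hx hxK
    hend t ht htx
  refine ⟨w, hxw, fun u hu => convexHull_min (fun a ha => ?_)
    (convex_halfSpace_le (f := (⟪·, w⟫)) ((innerₗ E).flip w).isLinear _) hu⟩
  simpa [inner_sub_left] using hw (a - x) (Finset.mem_image_of_mem _ ha)

theorem smul_notMem_of_forall_inner_le {C : Set E} {x w : E} (hxw : 0 < ⟪x, w⟫)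
    (hmax : ∀ u ∈ C, ⟪u, w⟫ ≤ ⟪x, w⟫) {t : ℝ} (ht : 1 < t) : t • x ∉ C := fun htx => by
  have := hmax _ htx
  rw [real_inner_smul_left] at this
  nlinarith

theorem isExposed_setOf_forall_inner_le (C : Set E) (w : E) :
    IsExposed ℝ C {v ∈ C | ∀ u ∈ C, ⟪u, w⟫ ≤ ⟪v, w⟫} :=
  fun _ => ⟨innerSL ℝ w, by simp [real_inner_comm]⟩

end InnerProduct

theorem polytope_end_set_closed_eq_S_general {n : ℕ} (A C : Set (EuclideanSpace ℝ (Fin n)))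
    (hA : A.Finite) (hC : C = convexHull ℝ A) :
    IsClosed {x ∈ C | ∀ t : ℝ, 1 < t → t • x ∉ C} ∧
    {x ∈ C | ∀ t : ℝ, 1 < t → t • x ∉ C} =
      ⋃ w ∈ {w : EuclideanSpace ℝ (Fin n) | 0 < sSup ((fun v => ⟪v, w⟫) '' C)},
        {v ∈ C | ∀ u ∈ C, ⟪u, w⟫ ≤ ⟪v, w⟫} := by
  subst hC
  have hsSup : ∀ {w x}, x ∈ convexHull ℝ A → (∀ u ∈ convexHull ℝ A, ⟪u, w⟫ ≤ ⟪x, w⟫) →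
      sSup ((fun v => ⟪v, w⟫) '' convexHull ℝ A) = ⟪x, w⟫ := fun hx hmax =>
    IsGreatest.csSup_eq ⟨mem_image_of_mem _ hx, forall_mem_image.2 hmax⟩
  have heq : {x ∈ convexHull ℝ A | ∀ t : ℝ, 1 < t → t • x ∉ convexHull ℝ A} =
      ⋃ w ∈ {w | 0 < sSup ((fun v => ⟪v, w⟫) '' convexHull ℝ A)},
        {v ∈ convexHull ℝ A | ∀ u ∈ convexHull ℝ A, ⟪u, w⟫ ≤ ⟪v, w⟫} := by
    ext x
    simp only [mem_ofPred_eq, mem_iUnion, exists_prop]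
    constructor
    · rintro ⟨hx, hend⟩
      obtain ⟨w, hxw, hmax⟩ := exists_inner_pos_of_forall_smul_notMem_convexHull hA hx hend
      exact ⟨w, (hsSup hx hmax).symm ▸ hxw, hx, hmax⟩
    · rintro ⟨w, hw, hx, hmax⟩
      exact ⟨hx, fun t => smul_notMem_of_forall_inner_le (hsSup hx hmax ▸ hw) hmax⟩
  refine ⟨?_, heq⟩
  rw [heq, biUnion_eq_iUnion]
  exact isClosed_iUnion_of_isExposed_convexHull hA fun w => isExposed_setOf_forall_inner_le _ w.1

/-- For a polytope containing 0, the end set is closed and equals the union of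
argmax sets over directions with positive support value. -/
theorem polytope_end_set_closed_eq_S {n : ℕ} (A C : Set (EuclideanSpace ℝ (Fin n)))
    (hA : A.Finite) (hC : C = convexHull ℝ A)
    (h0 : (0 : EuclideanSpace ℝ (Fin n)) ∈ C) :
    IsClosed {x ∈ C | ∀ t : ℝ, 1 < t → t • x ∉ C} ∧
    {x ∈ C | ∀ t : ℝ, 1 < t → t • x ∉ C} =
      ⋃ w ∈ {w : EuclideanSpace ℝ (Fin n) | 0 < sSup ((fun v => ⟪v, w⟫) '' C)},
        {v ∈ C | ∀ u ∈ C, ⟪u, w⟫ ≤ ⟪v, w⟫} :=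
  polytope_end_set_closed_eq_S_general A C hA hC
end

section
/- For the set C = {x ∈ ℝ² | 0 ≤ x₁ ≤ 1, x₁² ≤ x₂ ≤ x₁}, the end set es(C) is not closed. -/
/-!
Along the lower boundary arc `x ↦ (x, x²)` of `C`, for `0 < x ≤ 1`, scaling by `t > 1` gives
`(t x)² = t² x² > t x²`, so these points lie in the end set. They converge to `0`, which never lies
in an end set because `t • 0 = 0`.
-/

open Set Metric Filter
open scoped RealInnerProductSpace

/-- The set C = {x ∈ ℝ² | 0 ≤ x₁ ≤ 1, x₁² ≤ x₂ ≤ x₁}. -/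
def Cex : Set (EuclideanSpace ℝ (Fin 2)) :=
  {p | 0 ≤ p 0 ∧ p 0 ≤ 1 ∧ (p 0) ^ 2 ≤ p 1 ∧ p 1 ≤ p 0}

open Topology

def endSet {E : Type*} [TopologicalSpace E] [AddCommGroup E] [Module ℝ E] (A : Set E) : Set E :=
  {x ∈ closure A | ∀ t : ℝ, 1 < t → t • x ∉ closure A}

theorem zero_notMem_endSet {E : Type*} [TopologicalSpace E] [AddCommGroup E] [Module ℝ E]
    (A : Set E) : (0 : E) ∉ endSet A :=
  fun h => h.2 2 one_lt_two (by rw [smul_zero]; exact h.1)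

theorem isClosed_Cex : IsClosed Cex := by
  have h0 : Continuous fun p : EuclideanSpace ℝ (Fin 2) => p 0 := by fun_prop
  have h1 : Continuous fun p : EuclideanSpace ℝ (Fin 2) => p 1 := by fun_prop
  exact (isClosed_le continuous_const h0).inter <| (isClosed_le h0 continuous_const).inter <|
    (isClosed_le (h0.pow 2) h1).inter (isClosed_le h1 h0)

theorem parabola_mem_endSet_Cex {a : ℝ} (ha : 0 < a) (ha1 : a ≤ 1) :
    !₂[a, a ^ 2] ∈ endSet Cex := by
  rw [endSet, isClosed_Cex.closure_eq]
  refine ⟨⟨by simpa using ha.le, by simpa using ha1, by simp,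
    by simpa using pow_le_of_le_one ha.le ha1 two_ne_zero⟩, ?_⟩
  rintro t ht ⟨-, -, hsq, -⟩
  change (t * a) ^ 2 ≤ t * a ^ 2 at hsq
  nlinarith [mul_pos (mul_pos (sub_pos.mpr ht) (zero_lt_one.trans ht)) (pow_pos ha 2)]

theorem tendsto_parabola_nhds_zero :
    Tendsto (fun a : ℝ => !₂[a, a ^ 2]) (𝓝 0) (𝓝 0) := by
  have hcont : Continuous (fun a : ℝ => !₂[a, a ^ 2]) := by fun_prop
  have h0 : (!₂[0, 0] : EuclideanSpace ℝ (Fin 2)) = 0 := by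
    ext i; fin_cases i <;> rfl
  simpa [h0] using hcont.tendsto 0

theorem zero_mem_closure_endSet_Cex : (0 : EuclideanSpace ℝ (Fin 2)) ∈ closure (endSet Cex) :=
  mem_closure_of_tendsto (tendsto_parabola_nhds_zero.mono_left nhdsWithin_le_nhds)
    (mem_of_superset (Ioc_mem_nhdsGT one_pos) fun _ ha => parabola_mem_endSet_Cex ha.1 ha.2)

/-- The end set of Cex is not closed. -/
theorem end_set_not_closed_example :
    ¬ IsClosed {x ∈ closure Cex | ∀ t : ℝ, 1 < t → t • x ∉ closure Cex} := fun h =>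
  zero_notMem_endSet Cex (h.closure_subset zero_mem_closure_endSet_Cex)
end

section
/- Let C ⊆ ℝ^n be compact and convex with 0 ∈ C, and suppose es(C) is closed. Then the positive hull pos C := {0} ∪ {λ•x | x ∈ C, λ > 0} is closed, and the gauge γ_C is continuous at every point of pos C relative to pos C. -/
open Set Metric Filter Topology
open scoped RealInnerProductSpace
open scoped Pointwise

section Aux

variable {E : Type*} [NormedAddCommGroup E] [NormedSpace ℝ E]

/-- Decomposition: a nonzero point of the positive hull of a closed bounded set lies
in `gauge C y • C`, with the corresponding point in the end set. -/
lemma gauge_decomp_aux {C : Set E} (hC : IsClosed C) {M : ℝ} (hM : ∀ x ∈ C, ‖x‖ ≤ M)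
    {y : E} (hy : y ≠ 0) {l : ℝ} {c : E} (hl : 0 < l) (hc : c ∈ C) (hyc : y = l • c) :
    0 < gauge C y ∧ (gauge C y)⁻¹ • y ∈ C ∧
      ∀ t : ℝ, 1 < t → t • ((gauge C y)⁻¹ • y) ∉ C := by
  set S : Set ℝ := {r : ℝ | 0 < r ∧ y ∈ r • C} with hS
  have hlS : l ∈ S := ⟨hl, ⟨c, hc, hyc.symm⟩⟩
  have hMpos : 0 < M := by
    have hc0 : c ≠ 0 := by
      rintro rfl; exact hy (by simp [hyc])
    exact lt_of_lt_of_le (norm_pos_iff.mpr hc0) (hM c hc)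
  have hlb : ∀ r ∈ S, ‖y‖ / M ≤ r := by
    rintro r ⟨hr, b, hb, hby⟩
    have : ‖y‖ ≤ r * M := by
      rw [← hby, norm_smul, Real.norm_eq_abs, abs_of_pos hr]
      exact mul_le_mul_of_nonneg_left (hM b hb) hr.le
    exact (div_le_iff₀ hMpos).mpr this
  have hbdd : BddBelow S := ⟨‖y‖ / M, hlb⟩
  have hgdef : gauge C y = sInf S := rfl
  have hgpos : 0 < gauge C y := by
    rw [hgdef]
    exact lt_of_lt_of_le (div_pos (norm_pos_iff.mpr hy) hMpos) (le_csInf ⟨l, hlS⟩ hlb)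
  have hgne : gauge C y ≠ 0 := ne_of_gt hgpos
  refine ⟨hgpos, ?_, ?_⟩
  · -- membership via a minimizing sequence
    have hex : ∀ k : ℕ, ∃ r ∈ S, r < sInf S + ((k : ℝ) + 1)⁻¹ := fun k =>
      Real.lt_sInf_add_pos ⟨l, hlS⟩ (by positivity)
    choose r hrS hrlt using hex
    have hge : ∀ k, sInf S ≤ r k := fun k => csInf_le hbdd (hrS k)
    have htend : Tendsto r atTop (𝓝 (sInf S)) := by
      have h1 : Tendsto (fun k : ℕ => sInf S + ((k : ℝ) + 1)⁻¹) atTop (𝓝 (sInf S + 0)) :=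
        tendsto_const_nhds.add (tendsto_one_div_add_atTop_nhds_zero_nat.congr
          (by intro k; rw [one_div]))
      rw [add_zero] at h1
      exact tendsto_of_tendsto_of_tendsto_of_le_of_le tendsto_const_nhds h1 hge
        (fun k => (hrlt k).le)
    have hrpos : ∀ k, (r k) ≠ 0 := fun k => ne_of_gt (hrS k).1
    have hmemC : ∀ k, (r k)⁻¹ • y ∈ C := fun k =>
      (mem_smul_set_iff_inv_smul_mem₀ (hrpos k) _ _).mp (hrS k).2
    have hlim : Tendsto (fun k => (r k)⁻¹ • y) atTop (𝓝 ((sInf S)⁻¹ • y)) := by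
      have : Tendsto (fun k => (r k)⁻¹) atTop (𝓝 (sInf S)⁻¹) :=
        htend.inv₀ (by rw [← hgdef]; exact hgne)
      exact this.smul_const y
    have := hC.mem_of_tendsto hlim (Eventually.of_forall hmemC)
    rwa [hgdef]
  · intro t ht hmem
    have ht0 : (0 : ℝ) < t := lt_trans one_pos ht
    have hmem' : gauge C y / t ∈ S := by
      refine ⟨div_pos hgpos ht0, ?_⟩
      refine ⟨t • ((gauge C y)⁻¹ • y), hmem, ?_⟩
      simp only [smul_smul]
      have h1 : gauge C y / t * (t * (gauge C y)⁻¹) = 1 := by field_simp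
      rw [h1, one_smul]
    have hle : sInf S ≤ gauge C y / t := csInf_le hbdd hmem'
    have hlt : gauge C y / t < gauge C y := div_lt_self hgpos ht
    rw [← hgdef] at hle
    linarith

/-- The gauge of `γ • z` equals `γ` whenever `z` is in the end set of `C`. -/
lemma gauge_eq_of_end_aux {C : Set E} {z : E} {γ : ℝ} (hz : z ∈ C)
    (hzend : ∀ t : ℝ, 1 < t → t • z ∉ C) (hγ : 0 < γ) : gauge C (γ • z) = γ := by
  set S : Set ℝ := {r : ℝ | 0 < r ∧ γ • z ∈ r • C} with hS
  have hγS : γ ∈ S := ⟨hγ, ⟨z, hz, rfl⟩⟩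
  have hbdd : BddBelow S := ⟨0, fun r hr => hr.1.le⟩
  have hgdef : gauge C (γ • z) = sInf S := rfl
  have hle : gauge C (γ • z) ≤ γ := by rw [hgdef]; exact csInf_le hbdd hγS
  rcases lt_or_eq_of_le hle with hlt | heq
  · exfalso
    obtain ⟨r, hrS, hrγ⟩ := exists_lt_of_csInf_lt ⟨γ, hγS⟩ (by rw [← hgdef]; exact hlt)
    have hr0 : (0 : ℝ) < r := hrS.1
    have hmem : r⁻¹ • (γ • z) ∈ C :=
      (mem_smul_set_iff_inv_smul_mem₀ (ne_of_gt hr0) _ _).mp hrS.2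
    rw [smul_smul] at hmem
    exact hzend (r⁻¹ * γ) (by rw [inv_mul_eq_div]; exact (one_lt_div hr0).mpr hrγ) hmem
  · exact heq


/-- Subsequence extraction for sequences in the positive hull. -/
lemma pos_extract_aux {C : Set E} (hcomp : IsCompact C) (h0 : (0 : E) ∈ C)
    (hes : IsClosed {x ∈ C | ∀ t : ℝ, 1 < t → t • x ∉ C})
    {u : ℕ → E} (hu : ∀ k, u k ∈ ({0} ∪ {y | ∃ x ∈ C, ∃ l : ℝ, 0 < l ∧ y = l • x} : Set E))
    {x : E} (hx : Tendsto u atTop (𝓝 x)) (hx0 : x ≠ 0) :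
    ∃ z ∈ {x ∈ C | ∀ t : ℝ, 1 < t → t • x ∉ C}, ∃ γ : ℝ, 0 < γ ∧ x = γ • z ∧
      ∃ φ : ℕ → ℕ, StrictMono φ ∧ Tendsto (fun k => gauge C (u (φ k))) atTop (𝓝 γ) := by
  classical
  set ES := {x ∈ C | ∀ t : ℝ, 1 < t → t • x ∉ C} with hESdef
  have hC : IsClosed C := hcomp.isClosed
  obtain ⟨M, hM⟩ := hcomp.isBounded.exists_norm_le
  have hEScomp : IsCompact ES := hcomp.of_isClosed_subset hes fun z hz => hz.1
  have h0ES : (0 : E) ∉ ES := fun h => h.2 2 one_lt_two (by simpa using h0)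
  obtain ⟨δ, hδ, hball⟩ := Metric.isOpen_iff.mp hes.isOpen_compl 0 h0ES
  have hδES : ∀ z ∈ ES, δ ≤ ‖z‖ := by
    intro z hz
    by_contra h
    exact hball (mem_ball_zero_iff.mpr (lt_of_not_ge h)) hz
  have hev : ∀ᶠ k in atTop, u k ≠ 0 := hx.eventually (eventually_ne_nhds hx0)
  obtain ⟨N, hN⟩ := eventually_atTop.mp hev
  have hdec : ∀ k, u k ≠ 0 → 0 < gauge C (u k) ∧ (gauge C (u k))⁻¹ • u k ∈ ES := by
    intro k hk
    rcases hu k with h | ⟨c, hc, l, hl, hlc⟩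
    · exact absurd (Set.mem_singleton_iff.mp h) hk
    · obtain ⟨hpos, hmem, hend⟩ := gauge_decomp_aux hC hM hk hl hc hlc
      exact ⟨hpos, hmem, hend⟩
  have huN : u N ≠ 0 := hN N le_rfl
  set z0 : E := (gauge C (u N))⁻¹ • u N with hz0def
  have hz0ES : z0 ∈ ES := (hdec N huN).2
  set z : ℕ → E := fun k => if h : u k = 0 then z0 else (gauge C (u k))⁻¹ • u k with hzdef
  have hzES : ∀ k, z k ∈ ES := by
    intro k
    simp only [hzdef]
    split_ifs with h
    · exact hz0ES
    · exact (hdec k h).2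
  have hzu : ∀ k, u k ≠ 0 → u k = gauge C (u k) • z k := by
    intro k h
    simp only [hzdef]
    rw [dif_neg h, smul_inv_smul₀ (ne_of_gt (hdec k h).1)]
  obtain ⟨K, hK⟩ : ∃ K, ∀ k, ‖u k‖ ≤ K := by
    obtain ⟨K, hK⟩ := hx.norm.bddAbove_range
    exact ⟨K, fun k => hK (Set.mem_range_self k)⟩
  have hγIcc : ∀ k, gauge C (u k) ∈ Icc (0 : ℝ) (K / δ) := by
    intro k
    refine ⟨gauge_nonneg _, ?_⟩
    by_cases h : u k = 0
    · rw [h, gauge_zero]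
      exact div_nonneg ((norm_nonneg (u 0)).trans (hK 0)) hδ.le
    · have h1 : δ ≤ ‖z k‖ := hδES _ (hzES k)
      have h2 : ‖u k‖ = gauge C (u k) * ‖z k‖ := by
        conv_lhs => rw [hzu k h]
        rw [norm_smul, Real.norm_eq_abs, abs_of_pos (hdec k h).1]
      have h3 : gauge C (u k) * δ ≤ ‖u k‖ := by
        rw [h2]
        exact mul_le_mul_of_nonneg_left h1 (gauge_nonneg _)
      calc gauge C (u k) ≤ ‖u k‖ / δ := (le_div_iff₀ hδ).mpr h3
        _ ≤ K / δ := by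
            apply div_le_div_of_nonneg_right (hK k) hδ.le
  obtain ⟨zl, hzlES, φ₁, hφ₁, hzl⟩ := hEScomp.tendsto_subseq hzES
  obtain ⟨γl, hγlmem, φ₂, hφ₂, hγl⟩ :=
    (isCompact_Icc (a := (0 : ℝ)) (b := K / δ)).tendsto_subseq
      (x := fun k => gauge C (u (φ₁ k))) (fun k => hγIcc (φ₁ k))
  set φ : ℕ → ℕ := φ₁ ∘ φ₂ with hφdef
  have hφ : StrictMono φ := hφ₁.comp hφ₂
  have hφtop : Tendsto φ atTop atTop := hφ.tendsto_atTop
  have huφ : Tendsto (fun k => u (φ k)) atTop (𝓝 x) := hx.comp hφtop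
  have hzφ : Tendsto (fun k => z (φ k)) atTop (𝓝 zl) := hzl.comp hφ₂.tendsto_atTop
  have hγφ : Tendsto (fun k => gauge C (u (φ k))) atTop (𝓝 γl) := hγl
  have hsm : Tendsto (fun k => gauge C (u (φ k)) • z (φ k)) atTop (𝓝 (γl • zl)) :=
    hγφ.smul hzφ
  have heq : ∀ᶠ k in atTop, gauge C (u (φ k)) • z (φ k) = u (φ k) := by
    filter_upwards [hφtop.eventually hev] with k hk
    exact (hzu _ hk).symm
  have hxeq : x = γl • zl :=
    tendsto_nhds_unique huφ (hsm.congr' heq)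
  have hγl0 : 0 < γl := by
    rcases lt_or_eq_of_le hγlmem.1 with h | h
    · exact h
    · exfalso
      apply hx0
      rw [hxeq, ← h, zero_smul]
  exact ⟨zl, hzlES, γl, hγl0, hxeq, φ, hφ, hγφ⟩

end Aux

/-- If the end set of a compact convex C ∋ 0 is closed, then pos C is closed and
the gauge of C is (sequentially) continuous relative to pos C at every point of pos C. -/
theorem closed_end_set_implies_gauge_continuous {n : ℕ} (C : Set (EuclideanSpace ℝ (Fin n)))
    (hconv : Convex ℝ C) (hcomp : IsCompact C)
    (h0 : (0 : EuclideanSpace ℝ (Fin n)) ∈ C)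
    (hes : IsClosed {x ∈ C | ∀ t : ℝ, 1 < t → t • x ∉ C}) :
    IsClosed ({0} ∪ {y | ∃ x ∈ C, ∃ l : ℝ, 0 < l ∧ y = l • x} : Set (EuclideanSpace ℝ (Fin n))) ∧
    ∀ x ∈ ({0} ∪ {y | ∃ x ∈ C, ∃ l : ℝ, 0 < l ∧ y = l • x} : Set (EuclideanSpace ℝ (Fin n))),
      ∀ u : ℕ → EuclideanSpace ℝ (Fin n),
        (∀ k, u k ∈ ({0} ∪ {y | ∃ x ∈ C, ∃ l : ℝ, 0 < l ∧ y = l • x} :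
          Set (EuclideanSpace ℝ (Fin n)))) →
        Tendsto u atTop (𝓝 x) →
        Tendsto (fun k => gauge C (u k)) atTop (𝓝 (gauge C x)) := by
  classical
  have hC : IsClosed C := hcomp.isClosed
  obtain ⟨M, hM⟩ := hcomp.isBounded.exists_norm_le
  have h0ES : (0 : EuclideanSpace ℝ (Fin n)) ∉
      {x ∈ C | ∀ t : ℝ, 1 < t → t • x ∉ C} :=
    fun h => h.2 2 one_lt_two (by simpa using h0)
  obtain ⟨δ, hδ, hball⟩ := Metric.isOpen_iff.mp hes.isOpen_compl 0 h0ES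
  have hδES : ∀ z ∈ {x ∈ C | ∀ t : ℝ, 1 < t → t • x ∉ C}, δ ≤ ‖z‖ := by
    intro z hz
    by_contra h
    exact hball (mem_ball_zero_iff.mpr (lt_of_not_ge h)) hz
  constructor
  · apply IsSeqClosed.isClosed
    intro u x hu hx
    by_cases hx0 : x = 0
    · exact Set.mem_union_left _ (by simp [hx0])
    · obtain ⟨z, hzES, γ, hγ, hxeq, -⟩ := pos_extract_aux hcomp h0 hes hu hx hx0
      exact Set.mem_union_right _ ⟨z, hzES.1, γ, hγ, hxeq⟩
  · intro x hxP u hu hux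
    by_cases hx0 : x = 0
    · subst hx0
      rw [gauge_zero]
      have hbound : ∀ k, gauge C (u k) ≤ ‖u k‖ / δ := by
        intro k
        by_cases h : u k = 0
        · rw [h, gauge_zero, norm_zero, zero_div]
        · rcases hu k with hk | ⟨c, hc, l, hl, hlc⟩
          · exact absurd (Set.mem_singleton_iff.mp hk) h
          · obtain ⟨hpos, hmem, hend⟩ := gauge_decomp_aux hC hM h hl hc hlc
            have h1 : δ ≤ ‖(gauge C (u k))⁻¹ • u k‖ := hδES _ ⟨hmem, hend⟩
            rw [norm_smul, Real.norm_eq_abs, abs_of_pos (inv_pos.mpr hpos)] at h1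
            have h3 : gauge C (u k) * δ ≤ ‖u k‖ := by
              calc gauge C (u k) * δ ≤ gauge C (u k) * ((gauge C (u k))⁻¹ * ‖u k‖) :=
                    mul_le_mul_of_nonneg_left h1 (gauge_nonneg _)
                _ = ‖u k‖ := by
                    rw [← mul_assoc, mul_inv_cancel₀ (ne_of_gt hpos), one_mul]
            exact (le_div_iff₀ hδ).mpr h3
      have hlim : Tendsto (fun k => ‖u k‖ / δ) atTop (𝓝 0) := by
        have := (hux.norm).div_const δ
        simpa using this
      exact squeeze_zero (fun k => gauge_nonneg _) hbound hlim
    · apply tendsto_of_subseq_tendsto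
      intro ns hns
      obtain ⟨z, hzES, γ, hγ, hxeq, φ, hφ, hγφ⟩ :=
        pos_extract_aux hcomp h0 hes (fun k => hu (ns k)) (hux.comp hns) hx0
      refine ⟨φ, ?_⟩
      have hgx : gauge C x = γ := by
        rw [hxeq]
        exact gauge_eq_of_end_aux hzES.1 hzES.2 hγ
      rw [hgx]
      exact hγφ
end

section
/- Let C ⊆ ℝ^n be compact and convex with 0 ∈ C. If γ_C is continuous relative to pos C at every point of pos C, then es(C) is closed. -/
open Set Metric Filter Topology
open scoped RealInnerProductSpace Pointwise

/-- For `x ∈ C` in the end set, the gauge equals 1. -/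
lemma gauge_eq_one_of_end {E : Type*} [AddCommGroup E] [Module ℝ E]
    {C : Set E} {x : E} (hx : x ∈ C) (hend : ∀ t : ℝ, 1 < t → t • x ∉ C) :
    gauge C x = 1 := by
  refine le_antisymm (gauge_le_one_of_mem hx) ?_
  by_contra hlt
  push_neg at hlt
  have hne : (1 : ℝ) ∈ {r : ℝ | r ∈ Set.Ioi 0 ∧ x ∈ r • C} := by
    refine ⟨Set.mem_Ioi.2 one_pos, ?_⟩
    simpa using hx
  have hbdd : BddBelow {r : ℝ | r ∈ Set.Ioi 0 ∧ x ∈ r • C} :=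
    ⟨0, fun r hr => le_of_lt hr.1⟩
  have : gauge C x < 1 := hlt
  rw [gauge] at this
  obtain ⟨r, ⟨hr0, hrC⟩, hr1⟩ := exists_lt_of_csInf_lt ⟨1, hne⟩ this
  obtain ⟨c, hc, hcx⟩ := hrC
  have ht : (1 : ℝ) < r⁻¹ := (one_lt_inv₀ hr0).2 hr1
  exact hend r⁻¹ ht (by rw [← hcx, smul_smul, inv_mul_cancel₀ (ne_of_gt hr0), one_smul]; exact hc)

/-- If the gauge of a compact convex C ∋ 0 is (sequentially) continuous relative
to pos C at every point of pos C, then the end set of C is closed. -/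
theorem gauge_continuous_implies_closed_end_set {n : ℕ} (C : Set (EuclideanSpace ℝ (Fin n)))
    (hconv : Convex ℝ C) (hcomp : IsCompact C)
    (h0 : (0 : EuclideanSpace ℝ (Fin n)) ∈ C)
    (hcont : ∀ x ∈ ({0} ∪ {y | ∃ x ∈ C, ∃ l : ℝ, 0 < l ∧ y = l • x} :
        Set (EuclideanSpace ℝ (Fin n))),
      ∀ u : ℕ → EuclideanSpace ℝ (Fin n),
        (∀ k, u k ∈ ({0} ∪ {y | ∃ x ∈ C, ∃ l : ℝ, 0 < l ∧ y = l • x} :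
          Set (EuclideanSpace ℝ (Fin n)))) →
        Tendsto u atTop (𝓝 x) →
        Tendsto (fun k => gauge C (u k)) atTop (𝓝 (gauge C x))) :
    IsClosed {x ∈ C | ∀ t : ℝ, 1 < t → t • x ∉ C} := by
  apply IsSeqClosed.isClosed
  intro u x hu hux
  have hmemC : ∀ k, u k ∈ C := fun k => (hu k).1
  have hxC : x ∈ C := hcomp.isClosed.mem_of_tendsto hux (Eventually.of_forall hmemC)
  have hpos : ∀ y ∈ C, y ∈ ({0} ∪ {y | ∃ x ∈ C, ∃ l : ℝ, 0 < l ∧ y = l • x} :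
      Set (EuclideanSpace ℝ (Fin n))) := fun y hy =>
    Or.inr ⟨y, hy, 1, one_pos, (one_smul ℝ y).symm⟩
  have hg : Tendsto (fun k => gauge C (u k)) atTop (𝓝 (gauge C x)) :=
    hcont x (hpos x hxC) u (fun k => hpos (u k) (hmemC k)) hux
  have hgk : ∀ k, gauge C (u k) = 1 := fun k => gauge_eq_one_of_end (hmemC k) (hu k).2
  have hgx : gauge C x = 1 := by
    have : Tendsto (fun _ : ℕ => (1:ℝ)) atTop (𝓝 (gauge C x)) := by
      simpa [hgk] using hg
    exact (tendsto_nhds_unique tendsto_const_nhds this).symm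
  refine ⟨hxC, fun t ht hmem => ?_⟩
  have h1 : gauge C (t • x) ≤ 1 := gauge_le_one_of_mem hmem
  have h2 : gauge C (t • x) = t := by
    rw [gauge_smul_of_nonneg (le_of_lt (lt_trans one_pos ht)), hgx, smul_eq_mul, mul_one]
  linarith
end

section
/- Let C ⊆ ℝ^n be compact and convex (not necessarily containing 0) and let C' := conv(C ∪ {0}). Then es(C) = es(C'), the support function satisfies σ_{C'}(w) = max{σ_C(w), 0} for all w, and ⋃_{w : σ_C(w) > 0} argmax_{v ∈ C} ⟨v, w⟩ = ⋃_{w : σ_{C'}(w) > 0} argmax_{v ∈ C'} ⟨v, w⟩. -/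
open Set Metric Filter Topology
open scoped RealInnerProductSpace

private lemma mem_hull_zero_iff {n : ℕ} {C : Set (EuclideanSpace ℝ (Fin n))}
    (hconv : Convex ℝ C) (hne : C.Nonempty) (x : EuclideanSpace ℝ (Fin n)) :
    x ∈ convexHull ℝ (C ∪ {0}) ↔ ∃ a : ℝ, 0 ≤ a ∧ a ≤ 1 ∧ ∃ y ∈ C, x = a • y := by
  rw [hconv.convexHull_union (convex_singleton 0) hne (singleton_nonempty 0), mem_convexJoin]
  constructor
  · rintro ⟨y, hy, b, hb, hx⟩
    rw [mem_singleton_iff] at hb; subst hb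
    obtain ⟨a, c, ha, hc, hac, rfl⟩ := hx
    exact ⟨a, ha, by linarith, y, hy, by simp⟩
  · rintro ⟨a, ha0, ha1, y, hy, rfl⟩
    exact ⟨y, hy, 0, rfl, a, 1 - a, ha0, by linarith, by ring, by simp⟩

private lemma exists_max_inner {n : ℕ} {C : Set (EuclideanSpace ℝ (Fin n))}
    (hcomp : IsCompact C) (hne : C.Nonempty) (w : EuclideanSpace ℝ (Fin n)) :
    ∃ v ∈ C, (∀ u ∈ C, ⟪u, w⟫ ≤ ⟪v, w⟫) ∧
      sSup ((fun v => ⟪v, w⟫) '' C) = ⟪v, w⟫ := by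
  have hc : Continuous fun v : EuclideanSpace ℝ (Fin n) => ⟪v, w⟫ :=
    continuous_id.inner continuous_const
  obtain ⟨v, hvC, hv⟩ := hcomp.exists_isMaxOn hne hc.continuousOn
  refine ⟨v, hvC, fun u hu => hv hu, le_antisymm
    (csSup_le (hne.image _) ?_) (le_csSup ⟨⟪v, w⟫, ?_⟩ (mem_image_of_mem _ hvC))⟩
  · rintro _ ⟨u, hu, rfl⟩; exact hv hu
  · rintro _ ⟨u, hu, rfl⟩; exact hv hu

/-- For compact convex C and C' = conv(C ∪ {0}): the end sets coincide, the
support function of C' is the positive part of that of C, and the unions of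
argmax sets over directions with positive support value coincide. -/
theorem end_set_conv_union_zero {n : ℕ} (C : Set (EuclideanSpace ℝ (Fin n)))
    (hconv : Convex ℝ C) (hcomp : IsCompact C) (hne : C.Nonempty) :
    {x ∈ C | ∀ t : ℝ, 1 < t → t • x ∉ C} =
      {x ∈ convexHull ℝ (C ∪ {0}) | ∀ t : ℝ, 1 < t → t • x ∉ convexHull ℝ (C ∪ {0})} ∧
    (∀ w : EuclideanSpace ℝ (Fin n),
      sSup ((fun v => ⟪v, w⟫) '' convexHull ℝ (C ∪ {0})) =
        max (sSup ((fun v => ⟪v, w⟫) '' C)) 0) ∧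
    (⋃ w ∈ {w : EuclideanSpace ℝ (Fin n) | 0 < sSup ((fun v => ⟪v, w⟫) '' C)},
        {v ∈ C | ∀ u ∈ C, ⟪u, w⟫ ≤ ⟪v, w⟫}) =
      ⋃ w ∈ {w : EuclideanSpace ℝ (Fin n) |
          0 < sSup ((fun v => ⟪v, w⟫) '' convexHull ℝ (C ∪ {0}))},
        {v ∈ convexHull ℝ (C ∪ {0}) | ∀ u ∈ convexHull ℝ (C ∪ {0}), ⟪u, w⟫ ≤ ⟪v, w⟫} := by
  have hmem := mem_hull_zero_iff hconv hne
  have hCsub : C ⊆ convexHull ℝ (C ∪ {0}) :=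
    subset_union_left.trans (subset_convexHull ℝ _)
  have h0 : (0 : EuclideanSpace ℝ (Fin n)) ∈ convexHull ℝ (C ∪ {0}) :=
    subset_convexHull ℝ _ (Or.inr rfl)
  -- Part 2 first
  have part2 : ∀ w : EuclideanSpace ℝ (Fin n),
      sSup ((fun v => ⟪v, w⟫) '' convexHull ℝ (C ∪ {0})) =
        max (sSup ((fun v => ⟪v, w⟫) '' C)) 0 := by
    intro w
    obtain ⟨v, hvC, hvmax, hveq⟩ := exists_max_inner hcomp hne w
    rw [hveq]
    have hub : ∀ x ∈ convexHull ℝ (C ∪ {0}), ⟪x, w⟫ ≤ max (⟪v, w⟫) 0 := by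
      intro x hx
      obtain ⟨a, ha0, ha1, y, hy, rfl⟩ := (hmem x).1 hx
      rw [real_inner_smul_left]
      have h1 := hvmax y hy
      rcases le_total (⟪y, w⟫) 0 with h | h
      · exact le_trans (by nlinarith) (le_max_right _ _)
      · exact le_trans (by nlinarith) (le_max_left _ _)
    have hbdd : BddAbove ((fun v => ⟪v, w⟫) '' convexHull ℝ (C ∪ {0})) := by
      refine ⟨max (⟪v, w⟫) 0, ?_⟩
      rintro _ ⟨x, hx, rfl⟩; exact hub x hx
    refine le_antisymm (csSup_le (Set.Nonempty.image _ ⟨v, hCsub hvC⟩) ?_) ?_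
    · rintro _ ⟨x, hx, rfl⟩; exact hub x hx
    · rcases le_total (⟪v, w⟫) 0 with h | h
      · rw [max_eq_right h]
        refine le_csSup hbdd ⟨0, h0, ?_⟩
        simp
      · rw [max_eq_left h]
        exact le_csSup hbdd (mem_image_of_mem _ (hCsub hvC))
  refine ⟨?_, part2, ?_⟩
  · -- end sets
    ext x
    simp only [mem_setOf_eq]
    constructor
    · rintro ⟨hxC, hx⟩
      refine ⟨hCsub hxC, fun t ht hmem' => ?_⟩
      obtain ⟨a, ha0, ha1, y, hy, heq⟩ := (hmem (t • x)).1 hmem'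
      rcases eq_or_lt_of_le ha0 with rfl | ha0'
      · rw [zero_smul] at heq
        have hx0 : x = 0 := by
          have ht0 : t ≠ 0 := by linarith
          simpa [ht0] using heq
        exact hx t ht (by rw [hx0, smul_zero]; rwa [hx0] at hxC)
      · have hy' : y = (t / a) • x := by
          have : a⁻¹ • (a • y) = a⁻¹ • (t • x) := by rw [heq]
          rw [smul_smul, smul_smul, inv_mul_cancel₀ (ne_of_gt ha0'), one_smul] at this
          rw [this, div_eq_inv_mul]
        exact hx (t / a) ((one_lt_div ha0').2 (by linarith)) (hy' ▸ hy)
    · rintro ⟨hxC', hx⟩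
      obtain ⟨a, ha0, ha1, y, hy, rfl⟩ := (hmem x).1 hxC'
      rcases eq_or_lt_of_le ha1 with rfl | ha1'
      · simp only [one_smul] at hx ⊢
        exact ⟨hy, fun t ht hmemC => hx t ht (hCsub hmemC)⟩
      · exfalso
        rcases eq_or_lt_of_le ha0 with rfl | ha0'
        · exact hx 2 one_lt_two (by simpa using h0)
        · refine hx a⁻¹ ((one_lt_inv₀ ha0').2 ha1') ?_
          rw [smul_smul, inv_mul_cancel₀ (ne_of_gt ha0'), one_smul]
          exact hCsub hy
  · -- argmax unions
    ext x
    simp only [mem_iUnion, mem_setOf_eq, exists_prop]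
    constructor
    · rintro ⟨w, hw, hxC, hxmax⟩
      obtain ⟨v, hvC, hvmax, hveq⟩ := exists_max_inner hcomp hne w
      have hxpos : 0 < ⟪x, w⟫ := lt_of_lt_of_le (hveq ▸ hw) (hxmax v hvC)
      refine ⟨w, ?_, hCsub hxC, ?_⟩
      · rw [part2 w]; exact lt_max_of_lt_left hw
      · intro u hu
        obtain ⟨a, ha0, ha1, y, hy, rfl⟩ := (hmem u).1 hu
        rw [real_inner_smul_left]
        have h1 := hxmax y hy
        nlinarith
    · rintro ⟨w, hw', hxC', hxmax'⟩
      rw [part2 w] at hw'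
      have hw : 0 < sSup ((fun v => ⟪v, w⟫) '' C) := by
        rcases lt_max_iff.1 hw' with h | h
        · exact h
        · exact absurd h (lt_irrefl 0)
      obtain ⟨v, hvC, hvmax, hveq⟩ := exists_max_inner hcomp hne w
      have hvpos : 0 < ⟪v, w⟫ := hveq ▸ hw
      obtain ⟨a, ha0, ha1, y, hy, rfl⟩ := (hmem x).1 hxC'
      have hle : ⟪v, w⟫ ≤ ⟪(a : ℝ) • y, w⟫ := hxmax' v (hCsub hvC)
      rw [real_inner_smul_left] at hle
      have hyv : ⟪y, w⟫ ≤ ⟪v, w⟫ := hvmax y hy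
      have ha : a = 1 := by nlinarith
      subst ha
      rw [one_smul]
      exact ⟨w, hw, hy, fun u hu => by
        have := hxmax' u (hCsub hu)
        rwa [one_smul] at this⟩
end

section
/- Let A ⊆ ℝ^n be a nonempty finite set with C = conv A. Then 0 ∉ cl(es(C)), i.e., d(0, es(C)) > 0. -/
/-!
Write the polytope as the image of the standard simplex under `w ↦ ∑ a, w a • a`. If points
`x k = ∑ a, w k a • a` of it tend to `0`, pass to a subsequence along which the weights `w k`
tend to some `L` in the simplex; then `∑ a, L a • a = 0`, and `2 • w k - L` eventually lies in
the simplex, so `2 • x k` lies in the polytope and `x k` is not an end point.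
-/

open Filter Topology

section

variable {ι : Type*} [Fintype ι]

/-- Coordinates of `L` that vanish impose nothing, and each positive coordinate `L i` is
eventually below `2 * w i`. -/
theorem eventually_two_smul_sub_mem_stdSimplex {α : Type*} {l : Filter α} {w : α → ι → ℝ}
    {L : ι → ℝ} (hw : ∀ k, w k ∈ stdSimplex ℝ ι) (hL : L ∈ stdSimplex ℝ ι)
    (hwL : Tendsto w l (𝓝 L)) : ∀ᶠ k in l, (2 : ℝ) • w k - L ∈ stdSimplex ℝ ι := by
  have hnonneg : ∀ᶠ k in l, ∀ i, 0 ≤ 2 * w k i - L i := by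
    refine eventually_all.2 fun i => ?_
    rcases (hL.1 i).eq_or_lt with hLi | hLi
    · exact Eventually.of_forall fun k => by linarith [(hw k).1 i]
    · filter_upwards [(tendsto_pi_nhds.1 hwL i).eventually (eventually_gt_nhds (half_lt_self hLi))]
        with k hk
      linarith
  filter_upwards [hnonneg] with k hk
  refine ⟨fun i => by simpa using hk i, ?_⟩
  simp only [Pi.sub_apply, Pi.smul_apply, smul_eq_mul, Finset.sum_sub_distrib, ← Finset.mul_sum,
    (hw k).2, hL.2]
  norm_num

end

section

variable {E : Type*} [AddCommGroup E] [Module ℝ E] [TopologicalSpace E] [IsTopologicalAddGroup E]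
  [ContinuousSMul ℝ E] [T2Space E]

theorem exists_two_smul_sub_mem_image_stdSimplex {ι : Type*} [Fintype ι] (f : (ι → ℝ) →ₗ[ℝ] E)
    {x : ℕ → E} {y : E} (hx : ∀ k, x k ∈ f '' stdSimplex ℝ ι) (hxy : Tendsto x atTop (𝓝 y)) :
    ∃ k, (2 : ℝ) • x k - y ∈ f '' stdSimplex ℝ ι := by
  choose w hw hwx using hx
  obtain ⟨L, hL, φ, hφ, hwL⟩ := (isCompact_stdSimplex ℝ ι).tendsto_subseq hw
  have hfL : f L = y := by
    refine tendsto_nhds_unique ?_ (hxy.comp hφ.tendsto_atTop)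
    simpa only [Function.comp_def, hwx] using (f.continuous_of_finiteDimensional.tendsto L).comp hwL
  obtain ⟨k, hk⟩ := (eventually_two_smul_sub_mem_stdSimplex (fun k => hw (φ k)) hL hwL).exists
  exact ⟨φ k, _, hk, by simp [hwx, hfL]⟩

/-- This is where polyhedrality enters: it fails for a disc and `y` on its boundary. -/
theorem Set.Finite.exists_two_smul_sub_mem_convexHull {s : Set E} (hs : s.Finite) {x : ℕ → E}
    {y : E} (hx : ∀ k, x k ∈ convexHull ℝ s) (hxy : Tendsto x atTop (𝓝 y)) :
    ∃ k, (2 : ℝ) • x k - y ∈ convexHull ℝ s := by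
  rw [hs.convexHull_eq_image] at hx ⊢
  let := hs.fintype
  exact exists_two_smul_sub_mem_image_stdSimplex _ hx hxy

end

theorem zero_not_mem_closure_end_set_general {n : ℕ} (A : Set (EuclideanSpace ℝ (Fin n)))
    (hfin : A.Finite) :
    (0 : EuclideanSpace ℝ (Fin n)) ∉
      closure {x ∈ convexHull ℝ A | ∀ t : ℝ, 1 < t → t • x ∉ convexHull ℝ A} := by
  intro h0
  obtain ⟨x, hx, hx0⟩ := mem_closure_iff_seq_limit.1 h0
  obtain ⟨k, hk⟩ := hfin.exists_two_smul_sub_mem_convexHull (fun k => (hx k).1) hx0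
  exact (hx k).2 2 one_lt_two (by simpa using hk)

/-- For a finite set A with C = conv A, the origin has positive distance from the
end set of C, i.e. 0 is not in its closure. -/
theorem zero_not_mem_closure_end_set {n : ℕ} (A : Set (EuclideanSpace ℝ (Fin n)))
    (hfin : A.Finite) (hne : A.Nonempty) :
    (0 : EuclideanSpace ℝ (Fin n)) ∉
      closure {x ∈ convexHull ℝ A | ∀ t : ℝ, 1 < t → t • x ∉ convexHull ℝ A} :=
  zero_not_mem_closure_end_set_general A hfin
end

section
/- Let φ : ℝ^n → ℝ be convex (hence locally Lipschitz), let x̄ be a boundary point of the level set {φ ≤ 0} (so φ(x̄) = 0), and suppose: (a) the tangent cone to {φ ≤ 0} at x̄ equals {w | dφ(x̄)(w) ≤ 0}, where dφ(x̄)(w) = lim_{t↓0}(φ(x̄ + t w) − φ(x̄))/t is the directional derivative; (b) there is a neighborhood V of x̄ with {φ ≤ 0} ∩ V = (x̄ + T_{{φ≤0}}(x̄)) ∩ V. If τ > 0 satisfies τ·d(w, {dφ(x̄) ≤ 0}) ≤ max{dφ(x̄)(w), 0} for all w ∈ ℝ^n, then there exists a neighborhood U of x̄ such that τ·d(x, {φ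 ≤ 0}) ≤ max{φ(x), 0} for all x ∈ U. -/
open Set Metric Filter Topology
open scoped RealInnerProductSpace

/-- For a convex φ with a boundary point x₀ of {φ ≤ 0}, under the Abadie CQ (a)
and exactness of tangent approximation (b), any τ > 0 giving a global error bound
for the directional derivative dφ(x₀) gives a local error bound for φ at x₀. -/
theorem error_bound_from_directional_derivative {n : ℕ}
    (φ : EuclideanSpace ℝ (Fin n) → ℝ) (hconv : ConvexOn ℝ univ φ)
    (x₀ : EuclideanSpace ℝ (Fin n)) (hbd : x₀ ∈ frontier {x | φ x ≤ 0}) (hφ0 : φ x₀ = 0)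
    (Dφ : EuclideanSpace ℝ (Fin n) → ℝ)
    (hDφ : ∀ w, Tendsto (fun t : ℝ => (φ (x₀ + t • w) - φ x₀) / t) (𝓝[>] 0) (𝓝 (Dφ w)))
    (ha : tangentConeAt ℝ {x | φ x ≤ 0} x₀ = {w | Dφ w ≤ 0})
    (hb : ∃ V ∈ 𝓝 x₀, {x | φ x ≤ 0} ∩ V =
      ((fun w => x₀ + w) '' tangentConeAt ℝ {x | φ x ≤ 0} x₀) ∩ V)
    (τ : ℝ) (hτ : 0 < τ)
    (herr : ∀ w : EuclideanSpace ℝ (Fin n),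
      τ * infDist w {u | Dφ u ≤ 0} ≤ max (Dφ w) 0) :
    ∃ U ∈ 𝓝 x₀, ∀ x ∈ U, τ * infDist x {y | φ y ≤ 0} ≤ max (φ x) 0 := by
  -- Dφ 0 = 0
  have hD0 : Dφ 0 ≤ 0 := by
    have h := hDφ 0
    have h2 : Tendsto (fun t : ℝ => (φ (x₀ + t • (0 : EuclideanSpace ℝ (Fin n))) - φ x₀) / t)
        (𝓝[>] 0) (𝓝 0) := by
      simpa using (tendsto_const_nhds :
        Tendsto (fun _ : ℝ => (0:ℝ)) (𝓝[>] 0) (𝓝 0))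
    have := tendsto_nhds_unique h h2
    simp [this]
  have hKne : ({u | Dφ u ≤ 0} : Set (EuclideanSpace ℝ (Fin n))).Nonempty := ⟨0, hD0⟩
  -- subgradient inequality
  have hsub : ∀ w, Dφ w ≤ φ (x₀ + w) := by
    intro w
    have hIoc : Ioc (0:ℝ) 1 ∈ 𝓝[>] (0:ℝ) :=
      Ioc_mem_nhdsGT_of_mem ⟨le_refl 0, one_pos⟩
    refine le_of_tendsto (hDφ w) ?_
    filter_upwards [hIoc] with t ht
    have ht0 : 0 < t := ht.1
    have hc := hconv.2 (mem_univ x₀) (mem_univ (x₀ + w))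
      (by linarith [ht.2] : (0:ℝ) ≤ 1 - t) ht0.le (by ring)
    have key : φ (x₀ + t • w) ≤ (1 - t) * φ x₀ + t * φ (x₀ + w) := by
      have heq : (1 - t) • x₀ + t • (x₀ + w) = x₀ + t • w := by
        rw [smul_add]; module
      rwa [heq] at hc
    rw [div_le_iff₀ ht0]
    rw [hφ0] at key ⊢
    nlinarith
  obtain ⟨V, hV, hVeq⟩ := hb
  obtain ⟨r, hr, hball⟩ := Metric.mem_nhds_iff.mp hV
  refine ⟨Metric.ball x₀ (r/4), Metric.ball_mem_nhds _ (by positivity), ?_⟩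
  intro x hx
  set w := x - x₀ with hw
  have hxw : x = x₀ + w := by rw [hw]; abel
  have hwnorm : ‖w‖ < r/4 := by
    rw [hw, ← dist_eq_norm]; exact mem_ball.mp hx
  have hdwK : infDist w {u | Dφ u ≤ 0} ≤ ‖w‖ := by
    simpa [dist_eq_norm] using infDist_le_dist_of_mem (s := {u | Dφ u ≤ 0}) hD0
  have hdle : infDist x {y | φ y ≤ 0} ≤ infDist w {u | Dφ u ≤ 0} := by
    refine le_of_forall_pos_le_add ?_
    intro ε hε
    have hε'0 : 0 < min ε (r/4) := lt_min hε (by positivity)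
    obtain ⟨p, hpK, hpd⟩ := (infDist_lt_iff hKne).mp
      (lt_add_of_pos_right (infDist w {u | Dφ u ≤ 0}) hε'0)
    have hpnorm : ‖p‖ < r := by
      have h1 : ‖p‖ ≤ ‖p - w‖ + ‖w‖ := by
        simpa using norm_add_le (p - w) w
      have h2 : ‖p - w‖ < infDist w {u | Dφ u ≤ 0} + min ε (r/4) := by
        rw [norm_sub_rev, ← dist_eq_norm]; exact hpd
      have h3 : min ε (r/4) ≤ r/4 := min_le_right _ _
      nlinarith
    have hpV : x₀ + p ∈ V := hball (by
      rw [mem_ball, dist_eq_norm]; simpa using hpnorm)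
    have hpS : φ (x₀ + p) ≤ 0 := by
      have hmem : x₀ + p ∈
          ((fun w => x₀ + w) '' tangentConeAt ℝ {x | φ x ≤ 0} x₀) ∩ V :=
        ⟨⟨p, by rw [ha]; exact hpK, rfl⟩, hpV⟩
      rw [← hVeq] at hmem
      exact hmem.1
    calc infDist x {y | φ y ≤ 0} ≤ dist x (x₀ + p) := infDist_le_dist_of_mem hpS
      _ = dist w p := by
          rw [hxw, dist_eq_norm, dist_eq_norm]
          congr 1
          abel
      _ ≤ infDist w {u | Dφ u ≤ 0} + min ε (r/4) := hpd.le
      _ ≤ infDist w {u | Dφ u ≤ 0} + ε := by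
          gcongr
          exact min_le_left _ _
  calc τ * infDist x {y | φ y ≤ 0} ≤ τ * infDist w {u | Dφ u ≤ 0} :=
        mul_le_mul_of_nonneg_left hdle hτ.le
    _ ≤ max (Dφ w) 0 := herr w
    _ ≤ max (φ x) 0 := max_le_max (hxw ▸ hsub w) le_rfl
end
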